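/- For all a₁, a₂, a₃ ∈ {1,2,3}, the identity (I ⊗ P_{a₃}) · W · (P_{a₁} ⊗ P_{a₂}) = 8 · ET[a₁,a₂,a₃] · W · (P_{a₁} ⊗ P_{a₂}) holds in the 256×256 complex matrices, where I is the 16×16 identity matrix. -/

import Mathlib

open Matrix Kronecker

/-- The pattern sets `S₁ = {0000, 1111}`, `S₂ = {0011, 1100}`, `S₃ = {0110, 1001}`
(indexed here by `Fin 3`). -/
def patS : Fin 3 → Finset (Fin 4 → Fin 2)
  | 0 => {![0, 0, 0, 0], ![1, 1, 1, 1]}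
  | 1 => {![0, 0, 1, 1], ![1, 1, 0, 0]}
  | 2 => {![0, 1, 1, 0], ![1, 0, 0, 1]}

/-- The standard basis vector `|s⟩` of `ℂ^{16} ≅ (ℂ²)^{⊗4}`. -/
def ket (s : Fin 4 → Fin 2) : (Fin 4 → Fin 2) → ℂ := fun t => if t = s then 1 else 0

/-- `P_a = Σ_{s ∈ S_a} |s⟩⟨s|`, the orthogonal projection onto `span{|s⟩ : s ∈ S_a}`. -/
noncomputable def Pproj (a : Fin 3) : Matrix (Fin 4 → Fin 2) (Fin 4 → Fin 2) ℂ :=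
  ∑ s ∈ patS a, Matrix.vecMulVec (ket s) (ket s)

/-- The unitary `W` on `ℂ^{16} ⊗ ℂ^{16}` with `W(|s⟩ ⊗ |t⟩) = |s⟩ ⊗ |s ⊕ t⟩`
(four parallel CNOT gates, controls in the first factor, targets in the second). -/
def Wcnot :
    Matrix ((Fin 4 → Fin 2) × (Fin 4 → Fin 2)) ((Fin 4 → Fin 2) × (Fin 4 → Fin 2)) ℂ :=
  fun p q => if p.1 = q.1 ∧ p.2 = (fun i => q.1 i + q.2 i) then 1 else 0

/-- The 3×3×3 tensor `ET`. -/
noncomputable def ET : Fin 3 → Matrix (Fin 3) (Fin 3) ℝ :=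
  ![(1 / 8 : ℝ) • !![1, 0, 0; 0, 1, 0; 0, 0, 1],
    (1 / 8 : ℝ) • !![0, 1, 0; 1, 0, 0; 0, 0, 0],
    (1 / 8 : ℝ) • !![0, 0, 1; 0, 0, 0; 1, 0, 0]]

/-! `W` permutes the computational basis, so moving the projection `I ⊗ P_{a₃}` past it turns
`W · (P_{a₁} ⊗ P_{a₂})` into `W` times the diagonal matrix that at `|s⟩ ⊗ |t⟩` is
`[s ∈ S_{a₁}] [t ∈ S_{a₂}] [s ⊕ t ∈ S_{a₃}]`. Each `S_a` is a coset of `{0000, 1111}`, so on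
`S_{a₁} × S_{a₂}` the last factor is constant, and a finite check shows that this constant is
`8 · ET[a₁, a₂, a₃]`. -/

variable {σ R : Type*} [DecidableEq σ] [Semiring R]

def basisProj (A : Finset σ) : Matrix σ σ R :=
  diagonal fun t => if t ∈ A then 1 else 0

def controlledAdd [Add σ] : Matrix (σ × σ) (σ × σ) R :=
  of fun p q => if p = (q.1, q.1 + q.2) then 1 else 0

theorem one_kronecker_basisProj_mul_controlledAdd_mul [Fintype σ] [Add σ] {A B C : Finset σ}
    {x : R} (h : ∀ s ∈ A, ∀ t ∈ B, (if s + t ∈ C then 1 else 0) = x) :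
    ((1 : Matrix σ σ R) ⊗ₖ basisProj C) * controlledAdd * (basisProj A ⊗ₖ basisProj B)
      = x • (controlledAdd * (basisProj A ⊗ₖ basisProj B)) := by
  ext p q
  rw [basisProj, basisProj, basisProj, ← diagonal_one, diagonal_kronecker_diagonal,
    diagonal_kronecker_diagonal]
  simp only [diagonal_mul, mul_diagonal, Matrix.smul_apply, smul_eq_mul, controlledAdd, of_apply]
  by_cases hp : p = (q.1, q.1 + q.2)
  · subst hp
    by_cases hA : q.1 ∈ A
    · by_cases hB : q.2 ∈ B
      · simp [hA, hB, ← h _ hA _ hB]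
      · simp [hB]
    · simp [hA]
  · simp [hp]

theorem sum_vecMulVec_ket (S : Finset (Fin 4 → Fin 2)) :
    ∑ s ∈ S, vecMulVec (ket s) (ket s) = basisProj S := by
  ext t u
  simp only [Matrix.sum_apply, vecMulVec_apply, ket, basisProj, diagonal_apply, mul_ite, mul_one,
    mul_zero, Finset.sum_ite_eq]
  split_ifs <;> simp_all

theorem Wcnot_eq_controlledAdd : Wcnot = controlledAdd := by
  ext p q
  simp only [Wcnot, controlledAdd, of_apply, Prod.ext_iff]
  rfl

theorem ite_add_mem_patS {a b c : Fin 3} :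
    ∀ s ∈ patS a, ∀ t ∈ patS b,
      (if s + t ∈ patS c then 1 else 0 : ℂ) = ((8 * ET a b c : ℝ) : ℂ) := by
  fin_cases a <;> fin_cases b <;> fin_cases c <;> simp [patS, ET]

/-- `(I ⊗ P_{a₃}) · W · (P_{a₁} ⊗ P_{a₂}) = 8 · ET[a₁,a₂,a₃] · W · (P_{a₁} ⊗ P_{a₂})`
in the 256×256 complex matrices, where `I` is the 16×16 identity. -/
theorem stmt5 (a₁ a₂ a₃ : Fin 3) :
    ((1 : Matrix (Fin 4 → Fin 2) (Fin 4 → Fin 2) ℂ) ⊗ₖ Pproj a₃) * Wcnot *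
        (Pproj a₁ ⊗ₖ Pproj a₂)
      = ((8 * ET a₁ a₂ a₃ : ℝ) : ℂ) • (Wcnot * (Pproj a₁ ⊗ₖ Pproj a₂)) := by
  simp only [Pproj, sum_vecMulVec_ket, Wcnot_eq_controlledAdd]
  exact one_kronecker_basisProj_mul_controlledAdd_mul ite_add_mem_patS
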